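/- Let w = s_1…s_n be a word in the Farey binary tree with n ≥ 2, and let w′ = w·s_n be the word obtained by appending one more copy of the last symbol of w. Then every degree value occurring among the inner degrees of the Haros graph G_{⟨w′⟩} already occurs among the inner degrees of G_{⟨w⟩}; i.e. repeating a symbol generates no new degree value except at the boundary node. -/

import Mathlib

/-- Symbols for paths in the Farey binary tree. -/
inductive LR
  | L
  | R
deriving DecidableEq

/-- One step in the Farey binary tree: update the current pair of fractions
(represented as pairs (numerator, denominator) of naturals). -/
def fareyStep : ((ℕ × ℕ) × (ℕ × ℕ)) → LR → ((ℕ × ℕ) × (ℕ × ℕ))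
  | ((a, b), (c, d)), LR.L => ((a, b), (a + c, b + d))
  | ((a, b), (c, d)), LR.R => ((a + c, b + d), (c, d))

/-- The final pair of fractions of a word: after reading the first symbol `L`
the current pair is (0/1, 1/1); the remaining symbols update it. -/
def finalPair (w : List LR) : (ℕ × ℕ) × (ℕ × ℕ) :=
  w.tail.foldl fareyStep ((0, 1), (1, 1))

/-- The value ⟨w⟩ of a word: the mediant of its final pair, as (numerator, denominator). -/
def value (w : List LR) : ℕ × ℕ :=
  ((finalPair w).1.1 + (finalPair w).2.1, (finalPair w).1.2 + (finalPair w).2.2)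

/-- A word over {L,R} is a Farey word when its first symbol is `L`. -/
def IsFareyWord (w : List LR) : Prop := w.head? = some LR.L

/-- Concatenation of degree sequences:
[a₁,…,a_s] ⊕ [b₁,…,b_t] = [a₁+1, a₂, …, a_{s−1}, a_s+b₁, b₂, …, b_{t−1}, b_t+1]. -/
def oplus (A B : List ℕ) : List ℕ :=
  (A.dropLast.modifyHead (· + 1)) ++ [A.getLastD 0 + B.headD 0] ++ B.tail.dropLast
    ++ [B.getLastD 0 + 1]

/-- Update of the pair (D(left ancestor), D(right ancestor)) of unreduced degree
sequences along one symbol. -/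
def degStep : (List ℕ × List ℕ) → LR → (List ℕ × List ℕ)
  | (A, B), LR.L => (A, oplus A B)
  | (A, B), LR.R => (oplus A B, B)

/-- The pair (D(a/b), D(c/d)) of unreduced degree sequences of the final pair of a word;
0/1 and 1/1 are both assigned the list [1,1]. -/
def degPair (w : List LR) : List ℕ × List ℕ :=
  w.tail.foldl degStep ([1, 1], [1, 1])

/-- The unreduced degree sequence D(⟨w⟩) = D(a/b) ⊕ D(c/d) of the value of a word. -/
def Dseq (w : List LR) : List ℕ :=
  oplus (degPair w).1 (degPair w).2

/-- Reduction: [k₁,…,k_{q+1}] becomes [k₂,…,k_q, k₁+k_{q+1}]; the last entry is the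
boundary degree and the remaining ones are the inner degrees. -/
def reduce (D : List ℕ) : List ℕ :=
  D.tail.dropLast ++ [D.headD 0 + D.getLastD 0]

/-- The reduced degree sequence of the Haros graph G_{⟨w⟩}. -/
def degSeq (w : List LR) : List ℕ := reduce (Dseq w)

/-- Degree-distribution entropy S of the Haros graph G_{⟨w⟩}:
S = −Σ_k P(k)·ln P(k), summed over the degree values occurring in the reduced
degree sequence, where P(k) = m(k)/q. -/
noncomputable def Sent (w : List LR) : ℝ :=
  -∑ k ∈ (degSeq w).toFinset,
    (((degSeq w).count k : ℝ) / ((value w).2 : ℝ)) *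
      Real.log (((degSeq w).count k : ℝ) / ((value w).2 : ℝ))

/-- Reduced entropy H of the Haros graph G_{⟨w⟩} (with the convention 0·ln 0 = 0,
automatic since Real.log 0 = 0). -/
noncomputable def Hent (w : List LR) : ℝ :=
  let x : ℝ := ((value w).1 : ℝ) / ((value w).2 : ℝ)
  if x ≤ 1 / 2 then
    Sent w + 2 * x * Real.log x + (1 - 2 * x) * Real.log (1 - 2 * x)
  else
    Sent w + 2 * (1 - x) * Real.log (1 - x) + (2 * x - 1) * Real.log (2 * x - 1)

def innerDegrees (D : List ℕ) : List ℕ := D.tail.dropLast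

theorem dropLast_degSeq (w : List LR) : (degSeq w).dropLast = innerDegrees (Dseq w) := by
  simp [degSeq, reduce, innerDegrees]

theorem two_le_length_oplus (A B : List ℕ) : 2 ≤ (oplus A B).length := by
  simp only [oplus, List.length_append, List.length_singleton]
  omega

theorem getLastD_oplus (A B : List ℕ) : (oplus A B).getLastD 0 = B.getLastD 0 + 1 := by
  rw [oplus, List.getLastD_concat]

section Oplus

variable {A B : List ℕ}

theorem headD_oplus (hA : 2 ≤ A.length) : (oplus A B).headD 0 = A.headD 0 + 1 := by
  obtain ⟨x, y, M, rfl⟩ : ∃ x y M, A = x :: y :: M := by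
    match A, hA with
    | x :: y :: M, _ => exact ⟨x, y, M, rfl⟩
  simp [oplus]

theorem innerDegrees_oplus (hA : 2 ≤ A.length) :
    innerDegrees (oplus A B) =
      innerDegrees A ++ (A.getLastD 0 + B.headD 0) :: innerDegrees B := by
  obtain ⟨x, y, M, rfl⟩ : ∃ x y M, A = x :: y :: M := by
    match A, hA with
    | x :: y :: M, _ => exact ⟨x, y, M, rfl⟩
  simp [oplus, innerDegrees, List.dropLast_cons_of_ne_nil]

/-- When `B` starts like `A ⊕ B`, the inner degrees of `A ⊕ (A ⊕ B)` are a prefix of those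
of `A ⊕ B` followed by all of them. -/
theorem innerDegrees_oplus_oplus_left_subset (hA : 2 ≤ A.length)
    (hB : B.headD 0 = A.headD 0 + 1) :
    innerDegrees (oplus A (oplus A B)) ⊆ innerDegrees (oplus A B) := by
  intro k hk
  rw [innerDegrees_oplus hA, headD_oplus hA, ← hB] at hk
  rw [innerDegrees_oplus hA] at hk ⊢
  simp only [List.mem_append, List.mem_cons] at hk ⊢
  tauto

/-- When `A` ends like `A ⊕ B`, the inner degrees of `(A ⊕ B) ⊕ B` are those of `A ⊕ B`
followed by a suffix of them. -/
theorem innerDegrees_oplus_oplus_right_subset (hA : 2 ≤ A.length)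
    (hB : A.getLastD 0 = B.getLastD 0 + 1) :
    innerDegrees (oplus (oplus A B) B) ⊆ innerDegrees (oplus A B) := by
  intro k hk
  rw [innerDegrees_oplus (two_le_length_oplus A B), getLastD_oplus, ← hB] at hk
  rw [innerDegrees_oplus hA] at hk ⊢
  simp only [List.mem_append, List.mem_cons] at hk ⊢
  tauto

end Oplus

theorem degStep_L (p : List ℕ × List ℕ) : degStep p LR.L = (p.1, oplus p.1 p.2) := rfl

theorem degStep_R (p : List ℕ × List ℕ) : degStep p LR.R = (oplus p.1 p.2, p.2) := rfl

theorem degPair_concat {w : List LR} (hw : w ≠ []) (s : LR) :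
    degPair (w ++ [s]) = degStep (degPair w) s := by
  rw [degPair, List.tail_append_of_ne_nil hw, List.foldl_concat, degPair]

theorem two_le_length_degPair_fst (w : List LR) : 2 ≤ (degPair w).1.length := by
  suffices ∀ (l : List LR) (p : List ℕ × List ℕ), 2 ≤ p.1.length →
      2 ≤ (l.foldl degStep p).1.length from this _ _ le_rfl
  intro l
  induction l with
  | nil => exact fun _ h => h
  | cons s l ih =>
    intro p hp
    apply ih
    cases s
    · exact hp
    · exact two_le_length_oplus _ _

theorem headD_degPair_snd_of_getLast?_eq_L {w : List LR} (hlen : 2 ≤ w.length)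
    (hL : w.getLast? = some LR.L) :
    (degPair w).2.headD 0 = (degPair w).1.headD 0 + 1 := by
  obtain ⟨v, rfl⟩ := List.getLast?_eq_some_iff.1 hL
  have hv : v ≠ [] := by rintro rfl; simp at hlen
  rw [degPair_concat hv, degStep_L]
  exact headD_oplus (two_le_length_degPair_fst v)

theorem getLastD_degPair_fst_of_getLast?_eq_R {w : List LR} (hlen : 2 ≤ w.length)
    (hR : w.getLast? = some LR.R) :
    (degPair w).1.getLastD 0 = (degPair w).2.getLastD 0 + 1 := by
  obtain ⟨v, rfl⟩ := List.getLast?_eq_some_iff.1 hR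
  have hv : v ≠ [] := by rintro rfl; simp at hlen
  rw [degPair_concat hv, degStep_R]
  exact getLastD_oplus _ _

theorem statement7_general (w : List LR) (hlen : 2 ≤ w.length)
    (s : LR) (hs : w.getLast? = some s) :
    ∀ k ∈ (degSeq (w ++ [s])).dropLast, k ∈ (degSeq w).dropLast := by
  have hw : w ≠ [] := List.ne_nil_of_length_pos (by omega)
  rw [dropLast_degSeq, dropLast_degSeq, Dseq, Dseq, degPair_concat hw]
  have hA := two_le_length_degPair_fst w
  intro k hk
  cases s with
  | L =>
    rw [degStep_L] at hk
    exact innerDegrees_oplus_oplus_left_subset hA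
      (headD_degPair_snd_of_getLast?_eq_L hlen hs) hk
  | R =>
    rw [degStep_R] at hk
    exact innerDegrees_oplus_oplus_right_subset hA
      (getLastD_degPair_fst_of_getLast?_eq_R hlen hs) hk

/-- appending one more copy of the last symbol of a word w of length ≥ 2
generates no new degree value among the inner degrees: every value occurring among the
inner degrees of G_{⟨w·s_n⟩} already occurs among the inner degrees of G_{⟨w⟩}. -/
theorem statement7 (w : List LR) (hw : IsFareyWord w) (hlen : 2 ≤ w.length)
    (s : LR) (hs : w.getLast? = some s) :
    ∀ k ∈ (degSeq (w ++ [s])).dropLast, k ∈ (degSeq w).dropLast :=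
  statement7_general w hlen s hs
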